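/- (Proposition 3.3.7.) There exists a constant C ∈ ℕ such that for every integer n ≥ 1 there exist real polynomials p and q, each of degree at most C·n⁴, with q(x) ≥ 1 for all x ∈ [0,1] and | √(|x − 1/2|) − p(x)/q(x) | ≤ 2^{−n} for all x ∈ [0,1]. -/

import Mathlib

/-!
Newman's construction. Put `P(y) = ∏_{k < m} (y + a^k)` with `a^s = 1/2` and `m = s²`. For
`a^m < y ≤ 1` the point `y` lies between two consecutive nodes `a^(j+1) ≤ y ≤ a^j`, and on a window
of `s` indices around `j` the factors satisfy `|a^k - y| ≤ (1 - a^s)(a^k + y)`, so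
`|P(-y)| ≤ 2^(-s) P(y)`; hence `y (P(y) - P(-y)) / (P(y) + P(-y))` is within `4·2^(-s)` of `y`
(for `y ≤ a^m` trivially). This function is even in `y`, i.e. a rational function `r` of `t = y²`
approximating `√t` on `[0,1]`.

Since `|√u - √v| ≤ √|u - v|`, the function `√2 · r(r(t)/2)` approximates `t^(1/4)`, and
`t = (x - 1/2)²` turns this into an approximation of `√|x - 1/2|`; clearing denominators gives
degree `2(s² + 1)²`, and `s = 2n + 6` makes the error at most `2^(-n)`. Finally the denominator,
positive on the compact interval, is rescaled to be at least `1`.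
-/

open Polynomial Finset

namespace Polynomial

section CommSemiring

variable {R : Type*} [CommSemiring R]

noncomputable def evenPart (P : R[X]) : R[X] := contract 2 P

noncomputable def oddPart (P : R[X]) : R[X] := contract 2 P.divX

theorem natDegree_contract_le (p : ℕ) (f : R[X]) : (contract p f).natDegree ≤ f.natDegree :=
  natDegree_sum_le_of_forall_le _ _ fun _ hn =>
    (natDegree_monomial_le _).trans (Nat.lt_succ_iff.mp (mem_range.mp hn))

theorem natDegree_evenPart_le (P : R[X]) : P.evenPart.natDegree ≤ P.natDegree :=
  natDegree_contract_le 2 P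

theorem natDegree_oddPart_le (P : R[X]) : P.oddPart.natDegree ≤ P.natDegree :=
  (natDegree_contract_le 2 _).trans natDegree_divX_le

theorem expand_evenPart_add_X_mul_expand_oddPart (P : R[X]) :
    expand R 2 P.evenPart + X * expand R 2 P.oddPart = P := by
  ext (_ | n)
  · simp [evenPart, coeff_expand two_pos, coeff_contract two_ne_zero]
  · simp only [evenPart, oddPart, coeff_add, coeff_X_mul, coeff_expand two_pos,
      coeff_contract two_ne_zero, coeff_divX]
    rcases Nat.even_or_odd' n with ⟨k, rfl | rfl⟩
    · rw [if_neg (by omega), if_pos (by omega), zero_add]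
      congr 1; omega
    · rw [if_pos (by omega), if_neg (by omega), add_zero]
      congr 1; omega

theorem evenPart_eval_sq_add_mul_oddPart (P : R[X]) (x : R) :
    P.evenPart.eval (x ^ 2) + x * P.oddPart.eval (x ^ 2) = P.eval x := by
  conv_rhs => rw [← expand_evenPart_add_X_mul_expand_oddPart P]
  simp [expand_eval]

end CommSemiring

section CommRing

variable {R : Type*} [CommRing R]

theorem two_mul_evenPart_eval_sq (P : R[X]) (x : R) :
    2 * P.evenPart.eval (x ^ 2) = P.eval x + P.eval (-x) := by
  have h := evenPart_eval_sq_add_mul_oddPart P (-x)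
  rw [neg_sq] at h
  linear_combination h + evenPart_eval_sq_add_mul_oddPart P x

theorem two_mul_oddPart_eval_sq (P : R[X]) (x : R) :
    2 * x * P.oddPart.eval (x ^ 2) = P.eval x - P.eval (-x) := by
  have h := evenPart_eval_sq_add_mul_oddPart P (-x)
  rw [neg_sq] at h
  linear_combination evenPart_eval_sq_add_mul_oddPart P x - h

end CommRing

theorem eval_aeval_homogenize {K : Type*} [Field K] {p f g : K[X]} {n : ℕ}
    (hp : p.natDegree ≤ n) {x : K} (hg : g.eval x ≠ 0) :
    (MvPolynomial.aeval ![f, g] (p.homogenize n)).eval x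
      = p.eval (f.eval x / g.eval x) * g.eval x ^ n := by
  have hC : (evalRingHom x).comp (algebraMap K K[X]) = RingHom.id K :=
    RingHom.ext fun _ => eval_C
  rw [MvPolynomial.aeval_def, MvPolynomial.polynomial_eval_eval₂, hC]
  exact eval_homogenize hp _ hg

end Polynomial

theorem MvPolynomial.IsHomogeneous.natDegree_aeval_le {σ R : Type*} [CommSemiring R]
    {q : MvPolynomial σ R} {n d : ℕ} (hq : q.IsHomogeneous n) {v : σ → R[X]}
    (hv : ∀ i, (v i).natDegree ≤ d) : (MvPolynomial.aeval v q).natDegree ≤ n * d := by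
  rw [q.as_sum, map_sum]
  refine natDegree_sum_le_of_forall_le _ _ fun m hm => ?_
  have hmn : m.degree = n := by
    rw [Finsupp.degree_eq_weight_one]; exact hq (MvPolynomial.mem_support_iff.mp hm)
  rw [MvPolynomial.aeval_monomial, Polynomial.algebraMap_eq, Finsupp.prod]
  refine (natDegree_C_mul_le _ _).trans ((natDegree_prod_le _ _).trans ?_)
  rw [← hmn, Finsupp.degree_apply, sum_mul]
  exact sum_le_sum fun i _ => natDegree_pow_le.trans (Nat.mul_le_mul_left _ (hv i))

theorem Real.sqrt_le_sqrt_add_sqrt_abs_sub (a b : ℝ) : √a ≤ √b + √|a - b| := by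
  rw [Real.sqrt_le_iff]
  refine ⟨by positivity, ?_⟩
  nlinarith [Real.sq_sqrt' (x := b), le_max_left b 0, Real.sq_sqrt (abs_nonneg (a - b)),
    le_abs_self (a - b), mul_nonneg (Real.sqrt_nonneg b) (Real.sqrt_nonneg |a - b|)]

theorem Real.abs_sqrt_sub_sqrt_le (a b : ℝ) : |√a - √b| ≤ √|a - b| := by
  rw [abs_sub_le_iff]
  constructor
  · linarith [Real.sqrt_le_sqrt_add_sqrt_abs_sub a b]
  · have := Real.sqrt_le_sqrt_add_sqrt_abs_sub b a
    rw [abs_sub_comm] at this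
    linarith

theorem IsCompact.exists_pos_one_le_mul {X : Type*} [TopologicalSpace X] {K : Set X}
    (hK : IsCompact K) {f : X → ℝ} (hf : ContinuousOn f K) (hpos : ∀ x ∈ K, 0 < f x) :
    ∃ c, 0 < c ∧ ∀ x ∈ K, 1 ≤ c * f x := by
  obtain ⟨b, hb, hbf⟩ := hK.exists_forall_le' hf hpos
  exact ⟨b⁻¹, inv_pos.2 hb, fun x hx => (one_le_inv_mul₀ hb).2 (hbf x hx)⟩

theorem abs_sub_le_one_sub_mul_add {α : Type*} [CommRing α] [LinearOrder α]
    [IsStrictOrderedRing α] {u v b : α} (hb : b ≤ 1) (hu : 0 ≤ u) (hv : 0 ≤ v)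
    (huv : b * u ≤ v) (hvu : b * v ≤ u) :
    |u - v| ≤ (1 - b) * (u + v) := by
  rw [abs_sub_le_iff]
  constructor <;> nlinarith [mul_nonneg (sub_nonneg.2 hb) hu, mul_nonneg (sub_nonneg.2 hb) hv]

theorem prod_abs_pow_sub_le {a y : ℝ} {j s m : ℕ} (ha0 : 0 ≤ a) (ha1 : a ≤ 1) (hy : 0 ≤ y)
    (hjy : a ^ (j + 1) ≤ y) (hyj : y ≤ a ^ j) (hj : j < m) (hs : s ≤ m) :
    ∏ k ∈ range m, |a ^ k - y| ≤ (1 - a ^ s) ^ s * ∏ k ∈ range m, (a ^ k + y) := by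
  -- `s` consecutive indices `k` with `j + 1 ≤ k + s` and `k ≤ j + s`, inside `range m`
  set S := Ico (j + 1 - s) (j + 1 - s + s)
  have hS : S ⊆ range m := fun k hk => by
    simp only [S, mem_Ico, mem_range] at hk ⊢; omega
  have hfactor : ∀ k ∈ range m,
      |a ^ k - y| ≤ (if k ∈ S then 1 - a ^ s else 1) * (a ^ k + y) := by
    intro k _
    split_ifs with hk
    · simp only [S, mem_Ico] at hk
      refine abs_sub_le_one_sub_mul_add (pow_le_one₀ ha0 ha1) (pow_nonneg ha0 k) hy ?_ ?_
      · rw [← pow_add]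
        exact (pow_le_pow_of_le_one ha0 ha1 (by omega)).trans hjy
      · calc a ^ s * y ≤ a ^ s * a ^ j := mul_le_mul_of_nonneg_left hyj (pow_nonneg ha0 s)
          _ = a ^ (s + j) := (pow_add a s j).symm
          _ ≤ a ^ k := pow_le_pow_of_le_one ha0 ha1 (by omega)
    · rw [one_mul]
      exact abs_sub_le_one_sub_mul_add (b := 0) zero_le_one (pow_nonneg ha0 k) hy
        (by simpa using hy) (by simpa using pow_nonneg ha0 k) |>.trans_eq (by ring)
  calc ∏ k ∈ range m, |a ^ k - y|
      ≤ ∏ k ∈ range m, (if k ∈ S then 1 - a ^ s else 1) * (a ^ k + y) :=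
        prod_le_prod (fun _ _ => abs_nonneg _) hfactor
    _ = (1 - a ^ s) ^ s * ∏ k ∈ range m, (a ^ k + y) := by
        rw [prod_mul_distrib, prod_ite_mem, inter_eq_right.mpr hS, prod_const, Nat.card_Ico]
        congr 2; omega

noncomputable def newmanPoly (a : ℝ) (m : ℕ) : ℝ[X] := ∏ k ∈ range m, (X + C (a ^ k))

theorem eval_newmanPoly (a y : ℝ) (m : ℕ) :
    (newmanPoly a m).eval y = ∏ k ∈ range m, (a ^ k + y) := by
  simp only [newmanPoly, eval_prod, eval_add, eval_X, eval_C, add_comm]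

theorem natDegree_newmanPoly_le (a : ℝ) (m : ℕ) : (newmanPoly a m).natDegree ≤ m :=
  (natDegree_prod_le _ _).trans <| by
    simp only [natDegree_X_add_C, sum_const, card_range, smul_eq_mul, mul_one, le_refl]

section newmanPoly

variable {a : ℝ} {m : ℕ}

theorem eval_newmanPoly_pos (ha : 0 < a) {y : ℝ} (hy : 0 ≤ y) : 0 < (newmanPoly a m).eval y := by
  rw [eval_newmanPoly]
  exact prod_pos fun k _ => by positivity

theorem abs_eval_neg_newmanPoly_le_eval (ha : 0 ≤ a) {y : ℝ} (hy : 0 ≤ y) :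
    |(newmanPoly a m).eval (-y)| ≤ (newmanPoly a m).eval y := by
  rw [eval_newmanPoly, eval_newmanPoly, abs_prod]
  refine prod_le_prod (fun _ _ => abs_nonneg _) fun k _ => ?_
  rw [abs_le]; constructor <;> linarith [pow_nonneg ha k]

theorem eval_neg_newmanPoly_nonneg (ha0 : 0 ≤ a) (ha1 : a ≤ 1) {y : ℝ} (hy : y ≤ a ^ m) :
    0 ≤ (newmanPoly a m).eval (-y) := by
  rw [eval_newmanPoly]
  refine prod_nonneg fun k hk => ?_
  linarith [pow_le_pow_of_le_one ha0 ha1 (mem_range.mp hk).le]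

theorem abs_eval_neg_newmanPoly_le {y : ℝ} {s : ℕ} (ha0 : 0 < a) (ha1 : a < 1)
    (hs : s ≤ m) (hmy : a ^ m < y) (hy1 : y ≤ 1) :
    |(newmanPoly a m).eval (-y)| ≤ (1 - a ^ s) ^ s * (newmanPoly a m).eval y := by
  have hy0 : 0 < y := (pow_pos ha0 m).trans hmy
  obtain ⟨j, hjy, hyj⟩ := exists_nat_pow_near_of_lt_one hy0 hy1 ha0 ha1
  have hj : j < m := by
    by_contra! hmj
    exact not_lt.2 (hyj.trans (pow_le_pow_of_le_one ha0.le ha1.le hmj)) hmy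
  rw [eval_newmanPoly, eval_newmanPoly, abs_prod]
  simpa only [← sub_eq_add_neg] using
    prod_abs_pow_sub_le ha0.le ha1.le hy0.le hjy.le hyj hj hs

end newmanPoly

/-- With `P = newmanPoly a m` and `y = √t`: `2 · newmanSqrtDen a m (t) = P(y) + P(-y)` and
`2 · newmanSqrtNum a m (t) = y (P(y) - P(-y))`. -/
noncomputable def newmanSqrtNum (a : ℝ) (m : ℕ) : ℝ[X] := X * (newmanPoly a m).oddPart

noncomputable def newmanSqrtDen (a : ℝ) (m : ℕ) : ℝ[X] := (newmanPoly a m).evenPart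

theorem natDegree_newmanSqrtNum_le (a : ℝ) (m : ℕ) : (newmanSqrtNum a m).natDegree ≤ m + 1 :=
  natDegree_mul_le.trans <| by
    linarith [natDegree_X_le (R := ℝ),
      (natDegree_oddPart_le _).trans (natDegree_newmanPoly_le a m)]

theorem natDegree_newmanSqrtDen_le (a : ℝ) (m : ℕ) : (newmanSqrtDen a m).natDegree ≤ m :=
  (natDegree_evenPart_le _).trans (natDegree_newmanPoly_le a m)

theorem newman_ratio_bounds {A B y ε : ℝ} (hy : 0 ≤ y) (hBA : |B| ≤ A) (hAB : 0 < A + B)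
    (hε : 2 * y * |B| ≤ ε * (A + B)) :
    0 ≤ y * (A - B) / (A + B) ∧ |y - y * (A - B) / (A + B)| ≤ ε := by
  refine ⟨div_nonneg (mul_nonneg hy (by linarith [le_abs_self B])) hAB.le, ?_⟩
  have herr : y - y * (A - B) / (A + B) = 2 * y * B / (A + B) := by
    field_simp
    ring
  rw [herr, abs_div, abs_of_pos hAB, div_le_iff₀ hAB, abs_mul, abs_of_nonneg (by positivity)]
  exact hε

theorem newmanSqrt_approx {a : ℝ} {s m : ℕ} (ha0 : 0 < a) (ha1 : a < 1) (hs : s ≤ m)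
    (hρ : (1 - a ^ s) ^ s ≤ 1 / 2) {t : ℝ} (ht : t ∈ Set.Icc (0 : ℝ) 1) :
    0 < (newmanSqrtDen a m).eval t ∧
      0 ≤ (newmanSqrtNum a m).eval t / (newmanSqrtDen a m).eval t ∧
      |√t - (newmanSqrtNum a m).eval t / (newmanSqrtDen a m).eval t|
        ≤ max (a ^ m) (4 * (1 - a ^ s) ^ s) := by
  set y := √t
  have hy0 : 0 ≤ y := Real.sqrt_nonneg t
  have hy1 : y ≤ 1 := Real.sqrt_le_one.2 ht.2
  have hyt : y ^ 2 = t := Real.sq_sqrt ht.1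
  set A := (newmanPoly a m).eval y
  set B := (newmanPoly a m).eval (-y)
  have hA : 0 < A := eval_newmanPoly_pos ha0 hy0
  have hBA : |B| ≤ A := abs_eval_neg_newmanPoly_le_eval ha0.le hy0
  have hden : (newmanSqrtDen a m).eval t = (A + B) / 2 := by
    rw [newmanSqrtDen, ← hyt]
    linear_combination two_mul_evenPart_eval_sq (newmanPoly a m) y / 2
  have hnum : (newmanSqrtNum a m).eval t = y * (A - B) / 2 := by
    rw [newmanSqrtNum, eval_mul, eval_X, ← hyt]
    linear_combination y / 2 * two_mul_oddPart_eval_sq (newmanPoly a m) y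
  rw [hden, hnum, div_div_div_cancel_right₀ two_ne_zero]
  rcases le_or_gt y (a ^ m) with hym | hmy
  · have hB : 0 ≤ B := eval_neg_newmanPoly_nonneg ha0.le ha1.le hym
    refine ⟨by linarith, newman_ratio_bounds hy0 hBA (by linarith) ?_ |>.imp_right
      (le_max_of_le_left ·)⟩
    rw [abs_of_nonneg hB]
    nlinarith [le_abs_self B]
  · have hB : |B| ≤ (1 - a ^ s) ^ s * A := abs_eval_neg_newmanPoly_le ha0 ha1 hs hmy hy1
    have hρ0 : 0 ≤ (1 - a ^ s) ^ s := pow_nonneg (sub_nonneg.2 (pow_le_one₀ ha0.le ha1.le)) s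
    have hA2 : A ≤ 2 * (A + B) := by nlinarith [neg_abs_le B]
    refine ⟨by linarith, newman_ratio_bounds hy0 hBA (by linarith) ?_ |>.imp_right
      (le_max_of_le_right ·)⟩
    nlinarith [mul_le_of_le_one_left (abs_nonneg B) hy1, mul_le_mul_of_nonneg_left hA2 hρ0]

theorem newmanSqrt_approx_of_pow_eq_half {a : ℝ} {s : ℕ} (hs : s ≠ 0) (ha0 : 0 < a)
    (ha : a ^ s = 1 / 2) {t : ℝ} (ht : t ∈ Set.Icc (0 : ℝ) 1) :
    0 < (newmanSqrtDen a (s ^ 2)).eval t ∧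
      0 ≤ (newmanSqrtNum a (s ^ 2)).eval t / (newmanSqrtDen a (s ^ 2)).eval t ∧
      |√t - (newmanSqrtNum a (s ^ 2)).eval t / (newmanSqrtDen a (s ^ 2)).eval t|
        ≤ 4 * (1 / 2) ^ s := by
  have ha1 : a < 1 := by
    by_contra! h
    linarith [one_le_pow₀ (n := s) h]
  have hρ : (1 - a ^ s) ^ s = (1 / 2) ^ s := by rw [ha]; norm_num
  have hm : a ^ (s ^ 2) = (1 / 2) ^ s := by rw [sq, pow_mul, ha]
  have hhalf : ((1 : ℝ) / 2) ^ s ≤ 1 / 2 := pow_le_of_le_one (by norm_num) (by norm_num) hs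
  have h := newmanSqrt_approx ha0 ha1 (Nat.le_self_pow two_ne_zero s) (hρ ▸ hhalf) ht
  rwa [hρ, hm, max_eq_right (le_mul_of_one_le_left (by positivity) (by norm_num))] at h

theorem half_mem_Icc_of_abs_sqrt_sub_le {t z η : ℝ} (ht : t ≤ 1) (hz : 0 ≤ z)
    (hzt : |√t - z| ≤ η) (hη : η ≤ 1) : z / 2 ∈ Set.Icc (0 : ℝ) 1 :=
  ⟨by positivity, by linarith [(abs_le.mp hzt).1, Real.sqrt_le_one.2 ht]⟩

theorem abs_sqrt_sqrt_sub_le {f : ℝ → ℝ} {η : ℝ}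
    (hf : ∀ t ∈ Set.Icc (0 : ℝ) 1, 0 ≤ f t ∧ |√t - f t| ≤ η) (hη : η ≤ 1) {t : ℝ}
    (ht : t ∈ Set.Icc (0 : ℝ) 1) : |√(√t) - √2 * f (f t / 2)| ≤ √η + 2 * η := by
  obtain ⟨hz, hzt⟩ := hf t ht
  obtain ⟨-, hw⟩ := hf _ (half_mem_Icc_of_abs_sqrt_sub_le ht.2 hz hzt hη)
  have hsplit : √(f t) = √2 * √(f t / 2) := by
    rw [← Real.sqrt_mul zero_le_two]; ring_nf
  calc |√(√t) - √2 * f (f t / 2)|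
      ≤ |√(√t) - √(f t)| + |√(f t) - √2 * f (f t / 2)| := abs_sub_le _ _ _
    _ ≤ √η + 2 * η := by
      gcongr
      · exact (Real.abs_sqrt_sub_sqrt_le _ _).trans (Real.sqrt_le_sqrt hzt)
      · rw [hsplit, ← mul_sub, abs_mul, abs_of_nonneg (Real.sqrt_nonneg 2)]
        exact mul_le_mul (Real.sqrt_two_lt_three_halves.le.trans (by norm_num)) hw
          (abs_nonneg _) zero_le_two

/-- For `r = N / D` with `deg N, deg D ≤ M` and `t = (x - 1/2)²`,
`sqrtAbsNum N D M / sqrtAbsDen N D M = √2 · r(r(t) / 2)`: the inner fraction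
`N(t) / (2 D(t))` is substituted into the degree-`M` homogenizations of `N` and `D`. -/
noncomputable def sqrtAbsInner (N D : ℝ[X]) : Fin 2 → ℝ[X] :=
  ![N.comp ((X - C (1 / 2)) ^ 2), C 2 * D.comp ((X - C (1 / 2)) ^ 2)]

noncomputable def sqrtAbsNum (N D : ℝ[X]) (M : ℕ) : ℝ[X] :=
  C √2 * MvPolynomial.aeval (sqrtAbsInner N D) (N.homogenize M)

noncomputable def sqrtAbsDen (N D : ℝ[X]) (M : ℕ) : ℝ[X] :=
  MvPolynomial.aeval (sqrtAbsInner N D) (D.homogenize M)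

section sqrtAbs

variable {N D : ℝ[X]} {M : ℕ}

theorem natDegree_aeval_sqrtAbsInner_homogenize_le (P : ℝ[X]) (hN : N.natDegree ≤ M)
    (hD : D.natDegree ≤ M) :
    (MvPolynomial.aeval (sqrtAbsInner N D) (P.homogenize M)).natDegree ≤ M * (2 * M) := by
  refine (isHomogeneous_homogenize P).natDegree_aeval_le fun i => ?_
  have hg : ((X - C (1 / 2) : ℝ[X]) ^ 2).natDegree = 2 := by
    rw [natDegree_pow, natDegree_X_sub_C]
  fin_cases i
  · exact natDegree_comp_le.trans (by rw [hg]; omega)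
  · exact (natDegree_C_mul_le _ _).trans (natDegree_comp_le.trans (by rw [hg]; omega))

theorem sqrtAbs_approx {η : ℝ} (hN : N.natDegree ≤ M) (hD : D.natDegree ≤ M)
    (happrox : ∀ t ∈ Set.Icc (0 : ℝ) 1, 0 < D.eval t ∧ 0 ≤ N.eval t / D.eval t ∧
      |√t - N.eval t / D.eval t| ≤ η)
    (hη : η ≤ 1) {x : ℝ} (hx : x ∈ Set.Icc (0 : ℝ) 1) :
    0 < (sqrtAbsDen N D M).eval x ∧
      |√|x - 1 / 2| - (sqrtAbsNum N D M).eval x / (sqrtAbsDen N D M).eval x|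
        ≤ √η + 2 * η := by
  set r : ℝ → ℝ := fun u => N.eval u / D.eval u
  set t := (x - 1 / 2) ^ 2
  have ht : t ∈ Set.Icc (0 : ℝ) 1 :=
    ⟨sq_nonneg _, show (x - 1 / 2) ^ 2 ≤ 1 by nlinarith [hx.1, hx.2]⟩
  obtain ⟨hDt, hrt, hrt'⟩ := happrox t ht
  obtain ⟨hDz, -, -⟩ := happrox _ (half_mem_Icc_of_abs_sqrt_sub_le ht.2 hrt hrt' hη)
  have heval : ∀ P : ℝ[X], P.natDegree ≤ M →
      (MvPolynomial.aeval (sqrtAbsInner N D) (P.homogenize M)).eval x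
        = P.eval (r t / 2) * (2 * D.eval t) ^ M := by
    intro P hP
    rw [sqrtAbsInner, eval_aeval_homogenize hP]
    · simp [t, r, div_div, mul_comm]
    · simp only [eval_mul, eval_C, eval_comp, eval_pow, eval_sub, eval_X]
      exact mul_ne_zero two_ne_zero hDt.ne'
  have hpos : 0 < (2 * D.eval t) ^ M := by positivity
  rw [sqrtAbsNum, sqrtAbsDen, eval_mul, eval_C, heval N hN, heval D hD,
    mul_div_assoc, mul_div_mul_right _ _ hpos.ne', ← Real.sqrt_sq_eq_abs (x - 1 / 2)]
  exact ⟨by positivity, abs_sqrt_sqrt_sub_le (fun u hu => (happrox u hu).2) hη ht⟩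

end sqrtAbs

theorem exists_sqrtAbs_approx {s : ℕ} (hs : 2 ≤ s) :
    ∃ p q : ℝ[X], p.natDegree ≤ (s ^ 2 + 1) * (2 * (s ^ 2 + 1)) ∧
      q.natDegree ≤ (s ^ 2 + 1) * (2 * (s ^ 2 + 1)) ∧
      (∀ x ∈ Set.Icc (0 : ℝ) 1, 1 ≤ q.eval x) ∧
      ∀ x ∈ Set.Icc (0 : ℝ) 1,
        |√|x - 1 / 2| - p.eval x / q.eval x| ≤ √(4 * (1 / 2) ^ s) + 2 * (4 * (1 / 2) ^ s) := by
  set a : ℝ := (1 / 2) ^ ((s : ℝ)⁻¹)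
  have ha : a ^ s = 1 / 2 := Real.rpow_inv_natCast_pow (by norm_num) (by omega)
  have hη : 4 * ((1 : ℝ) / 2) ^ s ≤ 1 := by
    calc 4 * ((1 : ℝ) / 2) ^ s ≤ 4 * (1 / 2) ^ 2 := by
          gcongr 4 * ?_
          exact pow_le_pow_of_le_one (by norm_num) (by norm_num) hs
      _ = 1 := by norm_num
  set N := newmanSqrtNum a (s ^ 2)
  set D := newmanSqrtDen a (s ^ 2)
  have hN : N.natDegree ≤ s ^ 2 + 1 := natDegree_newmanSqrtNum_le a (s ^ 2)
  have hD : D.natDegree ≤ s ^ 2 + 1 := (natDegree_newmanSqrtDen_le a (s ^ 2)).trans (by omega)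
  have happrox := fun x (hx : x ∈ Set.Icc (0 : ℝ) 1) => sqrtAbs_approx hN hD
    (fun t ht => newmanSqrt_approx_of_pow_eq_half (by omega) (by positivity) ha ht) hη hx
  obtain ⟨c, hc, hcq⟩ := isCompact_Icc.exists_pos_one_le_mul
    (sqrtAbsDen N D (s ^ 2 + 1)).continuousOn fun x hx => (happrox x hx).1
  refine ⟨C c * sqrtAbsNum N D (s ^ 2 + 1), C c * sqrtAbsDen N D (s ^ 2 + 1), ?_, ?_,
    fun x hx => by simpa using hcq x hx, fun x hx => ?_⟩
  · exact (natDegree_C_mul_le _ _).trans <| (natDegree_C_mul_le _ _).trans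
      (natDegree_aeval_sqrtAbsInner_homogenize_le _ hN hD)
  · exact (natDegree_C_mul_le _ _).trans (natDegree_aeval_sqrtAbsInner_homogenize_le _ hN hD)
  · rw [eval_mul, eval_mul, eval_C, mul_div_mul_left _ _ hc.ne']
    exact (happrox x hx).2

theorem sqrt_add_two_mul_le_zpow (n : ℕ) :
    √(4 * (1 / 2) ^ (2 * n + 6)) + 2 * (4 * (1 / 2) ^ (2 * n + 6)) ≤ (2 : ℝ) ^ (-(n : ℤ)) := by
  set u : ℝ := (1 / 2) ^ (n + 2)
  have hu0 : 0 ≤ u := by positivity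
  have hu1 : u ≤ 1 := pow_le_one₀ (by norm_num) (by norm_num)
  have hη : 4 * (1 / 2 : ℝ) ^ (2 * n + 6) = u ^ 2 := by ring
  have hpow : (2 : ℝ) ^ (-(n : ℤ)) = 4 * u := by
    simp only [u, one_div, zpow_neg, zpow_natCast, inv_pow]; ring
  rw [hη, hpow, Real.sqrt_sq hu0]
  nlinarith

/-- Proposition 3.3.7: rational approximation of `x ↦ √|x - 1/2|` on `[0,1]`. -/
theorem sqrt_abs_rational_approx :
    ∃ C : ℕ, ∀ n : ℕ, 1 ≤ n →
      ∃ p q : Polynomial ℝ,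
        p.degree ≤ (C * n ^ 4 : ℕ) ∧ q.degree ≤ (C * n ^ 4 : ℕ) ∧
        (∀ x ∈ Set.Icc (0 : ℝ) 1, 1 ≤ q.eval x) ∧
        (∀ x ∈ Set.Icc (0 : ℝ) 1,
          |Real.sqrt |x - 1 / 2| - p.eval x / q.eval x| ≤ (2 : ℝ) ^ (-(n : ℤ))) := by
  refine ⟨8450, fun n hn => ?_⟩
  obtain ⟨p, q, hp, hq, hq1, happrox⟩ := exists_sqrtAbs_approx (s := 2 * n + 6) (by omega)
  have hdeg : ((2 * n + 6) ^ 2 + 1) * (2 * ((2 * n + 6) ^ 2 + 1)) ≤ 8450 * n ^ 4 := by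
    have h : (2 * n + 6) ^ 2 + 1 ≤ 65 * n ^ 2 := by nlinarith
    calc _ ≤ 65 * n ^ 2 * (2 * (65 * n ^ 2)) := by gcongr
      _ = 8450 * n ^ 4 := by ring
  exact ⟨p, q, degree_le_of_natDegree_le (hp.trans hdeg),
    degree_le_of_natDegree_le (hq.trans hdeg), hq1,
    fun x hx => (happrox x hx).trans (sqrt_add_two_mul_le_zpow n)⟩
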